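/- arXiv:1210.4778 — 4 statements merged into one kernel-verified Lean document; each statement's English description precedes it below -/
import Mathlib

section
/- Let P₁, …, P_m be n×n column stochastic matrices, each with strictly positive diagonal entries, and suppose the union digraph on {1, …, n} — which has a directed edge from i to j whenever (P_k)_{ji} > 0 for some k ∈ {1, …, m} and j ≠ i — is strongly connected. Then the product Q = P_m · P_{m−1} ⋯ P₁ is a column stochastic matrix with strictly positive diagonal entries, Q(j, i) > 0 whenever (P_k)_{ji} > 0 for some k, and there exists an integer p ≥ 1 such that every entry of Q^p is strictly positive. -/
open Matrix

/-- An `n × n` real matrix is column stochastic if all entries are nonnegative and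
each column sums to `1`. -/
def ColStoch {N : Type*} [Fintype N] (A : Matrix N N ℝ) : Prop :=
  (∀ j i, 0 ≤ A j i) ∧ ∀ i, ∑ j, A j i = 1

/-!
Products of nonnegative matrices with positive diagonals only gain positive entries: the
term `A j j * B j i` (resp. `A j i * B i i`) of `(A * B) j i` keeps every positive entry of `B`
(resp. `A`). Hence `Q` has positive diagonal and contains every edge of the union digraph, so
a path `i → ⋯ → j` of length `p` gives `0 < (Q ^ p) j i`, and positivity persists for larger
powers. Strong connectivity then makes a common power entrywise positive.
-/

section Positivity

variable {N : Type*} [Fintype N] {A B : Matrix N N ℝ}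

lemma mul_apply_nonneg (hA : ∀ j i, 0 ≤ A j i) (hB : ∀ j i, 0 ≤ B j i) (j i : N) :
    0 ≤ (A * B) j i :=
  Finset.sum_nonneg fun k _ => mul_nonneg (hA j k) (hB k i)

lemma mul_apply_pos (hA : ∀ j i, 0 ≤ A j i) (hB : ∀ j i, 0 ≤ B j i) {j k i : N}
    (hjk : 0 < A j k) (hki : 0 < B k i) : 0 < (A * B) j i :=
  Finset.sum_pos' (fun l _ => mul_nonneg (hA j l) (hB l i))
    ⟨k, Finset.mem_univ k, mul_pos hjk hki⟩

end Positivity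

namespace ColStoch

variable {N : Type*} [Fintype N]

lemma one [DecidableEq N] : ColStoch (1 : Matrix N N ℝ) :=
  ⟨fun j i => by by_cases h : j = i <;> simp [one_apply, h], fun i => by simp [one_apply]⟩

lemma mul {A B : Matrix N N ℝ} (hA : ColStoch A) (hB : ColStoch B) : ColStoch (A * B) := by
  refine ⟨mul_apply_nonneg hA.1 hB.1, fun i => ?_⟩
  calc ∑ j, (A * B) j i = ∑ k, (∑ j, A j k) * B k i := by
        simp only [mul_apply, Finset.sum_mul]
        exact Finset.sum_comm
    _ = 1 := by simp only [hA.2, one_mul, hB.2]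

lemma list_prod [DecidableEq N] {L : List (Matrix N N ℝ)} (hL : ∀ A ∈ L, ColStoch A) :
    ColStoch L.prod := by
  induction L with
  | nil => exact one
  | cons A L ih =>
    exact (hL A List.mem_cons_self).mul (ih fun B hB => hL B (List.mem_cons_of_mem A hB))

lemma pow [DecidableEq N] {Q : Matrix N N ℝ} (hQ : ColStoch Q) (p : ℕ) : ColStoch (Q ^ p) := by
  induction p with
  | zero => exact pow_zero Q ▸ one
  | succ p ih => exact pow_succ Q p ▸ ih.mul hQ

end ColStoch

section ListProd

variable {N : Type*} [Fintype N] [DecidableEq N] {L : List (Matrix N N ℝ)}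

lemma list_prod_diag_pos (hL : ∀ A ∈ L, ColStoch A) (hdiag : ∀ A ∈ L, ∀ j, 0 < A j j)
    (j : N) : 0 < L.prod j j := by
  induction L with
  | nil => simp
  | cons A L ih =>
    have hL' : ∀ B ∈ L, ColStoch B := fun B hB => hL B (List.mem_cons_of_mem A hB)
    exact mul_apply_pos (hL A List.mem_cons_self).1 (ColStoch.list_prod hL').1
      (hdiag A List.mem_cons_self j) (ih hL' fun B hB => hdiag B (List.mem_cons_of_mem A hB))

lemma list_prod_apply_pos_of_mem (hL : ∀ A ∈ L, ColStoch A) (hdiag : ∀ A ∈ L, ∀ j, 0 < A j j)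
    {A : Matrix N N ℝ} (hA : A ∈ L) {j i : N} (hji : 0 < A j i) : 0 < L.prod j i := by
  induction L with
  | nil => simp at hA
  | cons B L ih =>
    have hL' : ∀ C ∈ L, ColStoch C := fun C hC => hL C (List.mem_cons_of_mem B hC)
    have hdiag' : ∀ C ∈ L, ∀ j, 0 < C j j := fun C hC => hdiag C (List.mem_cons_of_mem B hC)
    have hB := (hL B List.mem_cons_self).1
    have hP := (ColStoch.list_prod hL').1
    rw [List.prod_cons]
    rcases List.mem_cons.mp hA with rfl | hA
    · exact mul_apply_pos hB hP hji (list_prod_diag_pos hL' hdiag' i)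
    · exact mul_apply_pos hB hP (hdiag B List.mem_cons_self j) (ih hL' hdiag' hA)

end ListProd

section Powers

variable {N : Type*} [Fintype N] [DecidableEq N] {Q : Matrix N N ℝ}

lemma pow_apply_pos_of_le (hQ : ColStoch Q) (hdiag : ∀ j, 0 < Q j j) {p q : ℕ} (hpq : p ≤ q)
    {j i : N} (hp : 0 < (Q ^ p) j i) : 0 < (Q ^ q) j i := by
  induction q, hpq using Nat.le_induction with
  | base => exact hp
  | succ q _ ih => exact pow_succ' Q q ▸ mul_apply_pos hQ.1 (hQ.pow q).1 (hdiag j) ih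

lemma exists_pow_apply_pos_of_transGen (hQ : ColStoch Q) {i j : N}
    (h : Relation.TransGen (fun a b => 0 < Q b a) i j) : ∃ p, 1 ≤ p ∧ 0 < (Q ^ p) j i := by
  induction h with
  | single hab => exact ⟨1, le_rfl, (pow_one Q).symm ▸ hab⟩
  | tail _ hbc ih =>
    obtain ⟨p, hp, hpos⟩ := ih
    exact ⟨p + 1, by omega, pow_succ' Q p ▸ mul_apply_pos hQ.1 (hQ.pow p).1 hbc hpos⟩

lemma exists_pow_pos_of_transGen (hQ : ColStoch Q) (hdiag : ∀ j, 0 < Q j j)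
    (hsc : ∀ i j : N, i ≠ j → Relation.TransGen (fun a b => 0 < Q b a) i j) :
    ∃ p, 1 ≤ p ∧ ∀ j i, 0 < (Q ^ p) j i := by
  have hpair : ∀ ij : N × N, ∃ p, 1 ≤ p ∧ 0 < (Q ^ p) ij.2 ij.1 := fun ⟨i, j⟩ => by
    by_cases hij : i = j
    · exact hij ▸ ⟨1, le_rfl, (pow_one Q).symm ▸ hdiag i⟩
    · exact exists_pow_apply_pos_of_transGen hQ (hsc i j hij)
  choose f _ hf using hpair
  refine ⟨Finset.univ.sup f ⊔ 1, le_sup_right, fun j i => ?_⟩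
  exact pow_apply_pos_of_le hQ hdiag
    ((Finset.le_sup (Finset.mem_univ (i, j))).trans le_sup_left) (hf (i, j))

end Powers

theorem statement10_general (n m : ℕ)
    (Ps : Fin m → Matrix (Fin n) (Fin n) ℝ)
    (hcs : ∀ k, ColStoch (Ps k))
    (hdiag : ∀ k j, 0 < Ps k j j)
    (hsc : ∀ i j : Fin n, i ≠ j →
      Relation.TransGen (fun a b => a ≠ b ∧ ∃ k, 0 < Ps k b a) i j) :
    ColStoch (List.ofFn Ps).reverse.prod ∧
      (∀ j, 0 < (List.ofFn Ps).reverse.prod j j) ∧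
      (∀ j i : Fin n, (∃ k, 0 < Ps k j i) → 0 < (List.ofFn Ps).reverse.prod j i) ∧
      ∃ p : ℕ, 1 ≤ p ∧ ∀ j i : Fin n, 0 < ((List.ofFn Ps).reverse.prod ^ p) j i := by
  have hmem : ∀ A, A ∈ (List.ofFn Ps).reverse ↔ ∃ k, Ps k = A := by
    simp only [List.mem_reverse, List.mem_ofFn, implies_true]
  have hL : ∀ A ∈ (List.ofFn Ps).reverse, ColStoch A := fun A hA => by
    obtain ⟨k, rfl⟩ := (hmem A).1 hA
    exact hcs k
  have hLdiag : ∀ A ∈ (List.ofFn Ps).reverse, ∀ j, 0 < A j j := fun A hA => by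
    obtain ⟨k, rfl⟩ := (hmem A).1 hA
    exact hdiag k
  have hQ := ColStoch.list_prod hL
  have hQdiag := list_prod_diag_pos hL hLdiag
  have hedge : ∀ j i : Fin n, (∃ k, 0 < Ps k j i) → 0 < (List.ofFn Ps).reverse.prod j i :=
    fun j i ⟨k, hk⟩ => list_prod_apply_pos_of_mem hL hLdiag ((hmem _).2 ⟨k, rfl⟩) hk
  refine ⟨hQ, hQdiag, hedge, exists_pow_pos_of_transGen hQ hQdiag fun i j hij => ?_⟩
  exact Relation.TransGen.mono (fun a b hab => hedge b a hab.2) i j (hsc i j hij)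

theorem statement10 (n m : ℕ) (hm : 1 ≤ m)
    (Ps : Fin m → Matrix (Fin n) (Fin n) ℝ)
    (hcs : ∀ k, ColStoch (Ps k))
    (hdiag : ∀ k j, 0 < Ps k j j)
    (hsc : ∀ i j : Fin n, i ≠ j →
      Relation.TransGen (fun a b => a ≠ b ∧ ∃ k, 0 < Ps k b a) i j) :
    ColStoch (List.ofFn Ps).reverse.prod ∧
      (∀ j, 0 < (List.ofFn Ps).reverse.prod j j) ∧
      (∀ j i : Fin n, (∃ k, 0 < Ps k j i) → 0 < (List.ofFn Ps).reverse.prod j i) ∧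
      ∃ p : ℕ, 1 ≤ p ∧ ∀ j i : Fin n, 0 < ((List.ofFn Ps).reverse.prod ^ p) j i :=
  statement10_general n m Ps hcs hdiag hsc
end

section
/- Let P be an n×n column stochastic matrix with P_{jj} > 0 for all j, let τ̄ ∈ ℕ, and let τ(k, j, i) ∈ {0, …, τ̄} be delay functions with τ(k, j, j) = 0. Then for any k ≥ 0 and any integer ℓ ≥ τ̄ + 1, the word B = P̄[k+ℓ] ⋯ P̄[k+1] of augmented matrices has top-left n×n block B₀₀ (rows 1..n, columns 1..n) satisfying: B₀₀(j, i) > 0 whenever P(j, i) > 0; in particular B₀₀ has strictly positive diagonal entries. -/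
open Matrix Filter

/-- The augmented `(τ̄+1)n × (τ̄+1)n` matrix `P̄[k]`, indexed by pairs `(r, j)` where
`r ∈ Fin (τ̄+1)` is the block (virtual-delay) index and `j ∈ Fin n` is the node index.
Block column `0` contains the blocks `P_r[k]` (with `P_r[k](j,i) = P(j,i)` if
`τ(k,j,i) = r` and `0` otherwise); the block in block-row `s-1`, block-column `s`
is the identity for `s = 1, …, τ̄`; all other blocks are zero. -/
def AugMat (n τbar : ℕ) (P : Matrix (Fin n) (Fin n) ℝ)
    (τ : ℕ → Fin n → Fin n → ℕ) (k : ℕ) :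
    Matrix (Fin (τbar + 1) × Fin n) (Fin (τbar + 1) × Fin n) ℝ :=
  fun q p =>
    if p.1.val = 0 then (if τ k q.2 p.2 = q.1.val then P q.2 p.2 else 0)
    else if q.1.val + 1 = p.1.val ∧ q.2 = p.2 then 1 else 0

/-- The word `P̄[k+ℓ] ⋯ P̄[k+2] ⬝ P̄[k+1]` of `ℓ` consecutive augmented matrices. -/
def Word (n τbar : ℕ) (P : Matrix (Fin n) (Fin n) ℝ)
    (τ : ℕ → Fin n → Fin n → ℕ) (k : ℕ) :
    ℕ → Matrix (Fin (τbar + 1) × Fin n) (Fin (τbar + 1) × Fin n) ℝ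
  | 0 => 1
  | ℓ + 1 => AugMat n τbar P τ (k + ℓ + 1) * Word n τbar P τ k ℓ

/-- A column stochastic matrix `B` is SIA if its powers `B^m` converge (entrywise)
to a matrix of the form `c ⬝ 𝟙ᵀ` for some nonnegative vector `c`. -/
def IsSIA {N : Type*} [Fintype N] [DecidableEq N] (B : Matrix N N ℝ) : Prop :=
  ColStoch B ∧ ∃ c : N → ℝ, (∀ j, 0 ≤ c j) ∧
    Tendsto (fun m => B ^ m) atTop (nhds (Matrix.of fun j _ => c j))

/-!
A path argument in the graph of the augmented matrices. Write
`Word k ℓ = Word (k+1) (ℓ-1) ⬝ P̄[k+1]`. If `P(j,i) > 0` and `r = τ(k+1,j,i)`, then `P̄[k+1]`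
has the positive entry `P(j,i)` at `((r,j),(0,i))`. The remaining word of length
`ℓ - 1 ≥ τ̄ ≥ r` moves mass from `(r,j)` back to `(0,j)`: each identity block shifts the delay
index down by one, and once it reaches `0` the positive diagonal `P(j,j)` (at delay
`τ(·,j,j) = 0`) keeps it there.
-/

theorem Matrix.mul_apply_pos {l m o R : Type*} [Fintype m] [Semiring R]
    [PartialOrder R] [IsStrictOrderedRing R] {A : Matrix l m R} {B : Matrix m o R}
    (hA : ∀ i x, 0 ≤ A i x) (hB : ∀ x k, 0 ≤ B x k) {i : l} {k : o} (x : m)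
    (hAx : 0 < A i x) (hBx : 0 < B x k) : 0 < (A * B) i k :=
  Finset.sum_pos' (fun y _ => mul_nonneg (hA i y) (hB y k))
    ⟨x, Finset.mem_univ x, mul_pos hAx hBx⟩

section AugmentedWord

variable {n τbar : ℕ} {P : Matrix (Fin n) (Fin n) ℝ} {τ : ℕ → Fin n → Fin n → ℕ}

theorem augMat_nonneg (hP : ∀ j i, 0 ≤ P j i) (k : ℕ) (q p : Fin (τbar + 1) × Fin n) :
    0 ≤ AugMat n τbar P τ k q p := by
  unfold AugMat
  split_ifs <;> first | exact hP _ _ | norm_num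

theorem word_nonneg (hP : ∀ j i, 0 ≤ P j i) (k m : ℕ) (q p : Fin (τbar + 1) × Fin n) :
    0 ≤ Word n τbar P τ k m q p := by
  induction m generalizing q p with
  | zero => simp only [Word, one_apply]; split_ifs <;> norm_num
  | succ m ih =>
    exact Finset.sum_nonneg fun x _ => mul_nonneg (augMat_nonneg hP _ _ _) (ih _ _)

theorem word_succ_eq_mul (k m : ℕ) :
    Word n τbar P τ k (m + 1) = Word n τbar P τ (k + 1) m * AugMat n τbar P τ (k + 1) := by
  induction m with
  | zero => simp [Word]
  | succ m ih =>
    rw [Word, ih, Word, ← mul_assoc]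
    congr 3
    omega

theorem augMat_delay_apply (k : ℕ) (j i : Fin n) (hr : τ k j i < τbar + 1) :
    AugMat n τbar P τ k (⟨τ k j i, hr⟩, j) (0, i) = P j i := by
  simp [AugMat]

theorem augMat_diag_apply (k : ℕ) (j : Fin n) (hτ : τ k j j = 0) :
    AugMat n τbar P τ k (0, j) (0, j) = P j j := by
  simp [AugMat, hτ]

theorem augMat_shift_apply (k : ℕ) (t : Fin (τbar + 1)) (ht : t.val + 1 < τbar + 1)
    (j : Fin n) :
    AugMat n τbar P τ k (t, j) (⟨t.val + 1, ht⟩, j) = 1 := by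
  simp [AugMat]

theorem word_pos_of_delay_le (hP : ∀ j i, 0 ≤ P j i) (hdiag : ∀ j, 0 < P j j)
    (hτself : ∀ k j, τ k j j = 0) (m k : ℕ) (s : Fin (τbar + 1)) (j : Fin n)
    (hs : s.val ≤ m) :
    0 < Word n τbar P τ k m (0, j) (s, j) := by
  induction m generalizing k s with
  | zero =>
    obtain rfl : s = 0 := Fin.ext (Nat.le_zero.mp hs)
    simp [Word]
  | succ m ih =>
    rw [word_succ_eq_mul]
    obtain ⟨s, hs_lt⟩ := s
    cases s with
    | zero =>
      have hstay : 0 < AugMat n τbar P τ (k + 1) (0, j) (0, j) := by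
        rw [augMat_diag_apply _ _ (hτself _ _)]
        exact hdiag j
      exact mul_apply_pos (word_nonneg hP _ _) (augMat_nonneg hP _) (0, j)
        (ih _ 0 (Nat.zero_le _)) hstay
    | succ t =>
      exact mul_apply_pos (word_nonneg hP _ _) (augMat_nonneg hP _) (⟨t, by omega⟩, j)
        (ih _ _ (by simp only at hs ⊢; omega)) (by rw [augMat_shift_apply]; norm_num)

end AugmentedWord

theorem statement12 (n : ℕ)
    (P : Matrix (Fin n) (Fin n) ℝ) (hP : ColStoch P)
    (hdiag : ∀ j, 0 < P j j)
    (τbar : ℕ) (τ : ℕ → Fin n → Fin n → ℕ)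
    (hτle : ∀ k j i, τ k j i ≤ τbar)
    (hτself : ∀ k j, τ k j j = 0)
    (k ℓ : ℕ) (hℓ : τbar + 1 ≤ ℓ) :
    (∀ j i : Fin n, 0 < P j i → 0 < Word n τbar P τ k ℓ (0, j) (0, i)) ∧
      ∀ j : Fin n, 0 < Word n τbar P τ k ℓ (0, j) (0, j) := by
  have hoff : ∀ j i : Fin n, 0 < P j i → 0 < Word n τbar P τ k ℓ (0, j) (0, i) := by
    intro j i hji
    obtain ⟨m, rfl⟩ : ∃ m, ℓ = m + 1 := ⟨ℓ - 1, by omega⟩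
    have hr : τ (k + 1) j i < τbar + 1 := Nat.lt_succ_of_le (hτle _ _ _)
    rw [word_succ_eq_mul]
    refine mul_apply_pos (word_nonneg hP.1 _ _) (augMat_nonneg hP.1 _) (⟨_, hr⟩, j) ?_
      (by rwa [augMat_delay_apply])
    exact word_pos_of_delay_le hP.1 hdiag hτself _ _ _ _ (by simp only; omega)
  exact ⟨hoff, fun j => hoff j j (hdiag j)⟩
end

section
/- Let m ≥ n ≥ 1, let b ∈ ℝ^m be a row vector of the form b = c·(𝟙 + e)ᵀ componentwise (i.e., b_i = c(1 + e_i)) with c > 0 and e_max := max_i |e_i| < 1. Let ȳ ∈ ℝ^m and let z̄ ∈ ℝ^m have entries in {0, 1} with exactly n entries equal to 1. Set Σ_y = Σ_i ȳ_i and Σ_{|y|} = Σ_i |ȳ_i|, and assume Σ_y > 0. Then b·z̄ > 0 and the ratio (b·ȳ)/(b·z̄) satisfies |(b·ȳ)/(b·z̄) − μ*| ≤ μ* · (Σ_y + Σ_{|y|}) · e_max / (Σ_y · (1 − e_max)), where μ* = Σ_y / n. -/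
set_option maxHeartbeats 1000000


theorem statement15 (n m : ℕ) (hn : 1 ≤ n) (hnm : n ≤ m)
    (c : ℝ) (hc : 0 < c)
    (e : Fin m → ℝ) (emax : ℝ)
    (hemax : IsGreatest (Set.range fun i => |e i|) emax) (hemax1 : emax < 1)
    (b : Fin m → ℝ) (hb : ∀ i, b i = c * (1 + e i))
    (ybar zbar : Fin m → ℝ)
    (hz01 : ∀ i, zbar i = 0 ∨ zbar i = 1)
    (hzcard : (Finset.univ.filter fun i => zbar i = 1).card = n)
    (hSy : 0 < ∑ i, ybar i) :
    0 < ∑ i, b i * zbar i ∧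
      |(∑ i, b i * ybar i) / (∑ i, b i * zbar i) - (∑ i, ybar i) / (n : ℝ)| ≤
        ((∑ i, ybar i) / (n : ℝ)) * ((∑ i, ybar i) + ∑ i, |ybar i|) * emax /
          ((∑ i, ybar i) * (1 - emax)) := by
  obtain ⟨-, hub⟩ := hemax
  have hei : ∀ i, |e i| ≤ emax := fun i => hub ⟨i, rfl⟩
  have hm : 1 ≤ m := le_trans hn hnm
  have he0 : 0 ≤ emax := le_trans (abs_nonneg _) (hei ⟨0, by omega⟩)
  have hnpos : (0:ℝ) < n := by exact_mod_cast hn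
  have hznn : ∀ i, 0 ≤ zbar i := fun i => by rcases hz01 i with h | h <;> simp [h]
  have hz : ∑ i, zbar i = n := by
    rw [← hzcard, Finset.card_filter]
    push_cast
    refine Finset.sum_congr rfl fun i _ => ?_
    rcases hz01 i with h | h <;> simp [h]
  set A := ∑ i, e i * zbar i with hA
  set B := ∑ i, e i * ybar i with hB
  set Sy := ∑ i, ybar i with hSydef
  set S := ∑ i, |ybar i| with hSdef
  have hS0 : 0 ≤ S := Finset.sum_nonneg fun i _ => abs_nonneg _
  have hAbs : |A| ≤ emax * n := by
    calc |A| ≤ ∑ i, |e i * zbar i| := Finset.abs_sum_le_sum_abs _ _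
    _ ≤ ∑ i, emax * zbar i := Finset.sum_le_sum fun i _ => by
        rw [abs_mul, abs_of_nonneg (hznn i)]
        exact mul_le_mul_of_nonneg_right (hei i) (hznn i)
    _ = emax * n := by rw [← Finset.mul_sum, hz]
  have hBbs : |B| ≤ emax * S := by
    calc |B| ≤ ∑ i, |e i * ybar i| := Finset.abs_sum_le_sum_abs _ _
    _ ≤ ∑ i, emax * |ybar i| := Finset.sum_le_sum fun i _ => by
        rw [abs_mul]
        exact mul_le_mul_of_nonneg_right (hei i) (abs_nonneg _)
    _ = emax * S := by rw [← Finset.mul_sum]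
  obtain ⟨hA1, hA2⟩ := abs_le.mp hAbs
  obtain ⟨hB1, hB2⟩ := abs_le.mp hBbs
  have hZ : ∑ i, b i * zbar i = c * n + c * A := by
    have h : ∀ i, b i * zbar i = c * zbar i + c * (e i * zbar i) := fun i => by
      rw [hb]; ring
    rw [Finset.sum_congr rfl fun i _ => h i, Finset.sum_add_distrib,
      ← Finset.mul_sum, ← Finset.mul_sum, hz]
  have hY : ∑ i, b i * ybar i = c * Sy + c * B := by
    have h : ∀ i, b i * ybar i = c * ybar i + c * (e i * ybar i) := fun i => by
      rw [hb]; ring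
    rw [Finset.sum_congr rfl fun i _ => h i, Finset.sum_add_distrib,
      ← Finset.mul_sum, ← Finset.mul_sum]
  set Z := ∑ i, b i * zbar i with hZdef
  set Y := ∑ i, b i * ybar i with hYdef
  have h1me : 0 < 1 - emax := by linarith
  have hZlb : c * n * (1 - emax) ≤ Z := by rw [hZ]; nlinarith
  have hZpos : 0 < Z := lt_of_lt_of_le (mul_pos (mul_pos hc hnpos) h1me) hZlb
  refine ⟨hZpos, ?_⟩
  have hRHS : Sy / n * (Sy + S) * emax / (Sy * (1 - emax))
      = emax * (Sy + S) / (n * (1 - emax)) := by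
    have h1 : Sy ≠ 0 := ne_of_gt hSy
    have h2 : (n:ℝ) ≠ 0 := ne_of_gt hnpos
    have h3 : (1:ℝ) - emax ≠ 0 := by linarith
    field_simp
  rw [hRHS, div_sub_div _ _ (ne_of_gt hZpos) (ne_of_gt hnpos), abs_div,
    abs_of_pos (by positivity : (0:ℝ) < Z * n),
    div_le_div_iff₀ (by positivity) (mul_pos hnpos h1me)]
  have hnum : |Y * n - Z * Sy| ≤ c * n * emax * (S + Sy) := by
    have h : Y * n - Z * Sy = c * (B * n - Sy * A) := by rw [hY, hZ]; ring
    rw [h, abs_le]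
    constructor
    · nlinarith [mul_le_mul_of_nonneg_left hA2 (le_of_lt hSy),
        mul_le_mul_of_nonneg_left hB1 (le_of_lt hnpos)]
    · nlinarith [mul_le_mul_of_nonneg_left hA1 (le_of_lt hSy),
        mul_le_mul_of_nonneg_left hB2 (le_of_lt hnpos)]
  have hkey : emax * (Sy + S) * n * (c * n * (1 - emax)) ≤ emax * (Sy + S) * n * Z :=
    mul_le_mul_of_nonneg_left hZlb (by positivity)
  calc |Y * n - Z * Sy| * (n * (1 - emax))
      ≤ (c * n * emax * (S + Sy)) * (n * (1 - emax)) :=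
        mul_le_mul_of_nonneg_right hnum (le_of_lt (mul_pos hnpos h1me))
    _ = emax * (Sy + S) * n * (c * n * (1 - emax)) := by ring
    _ ≤ emax * (Sy + S) * n * Z := hkey
    _ = emax * (Sy + S) * (Z * n) := by ring
end

section
/- Let m ≥ n ≥ 1 and let (B_k)_{k≥0} be a sequence of m×m column stochastic matrices such that δ(B_k) → 0 as k → ∞ and there exist c_min > 0 and K ∈ ℕ with B_k(j, i) ≥ c_min for all k ≥ K, all j ∈ {1, …, n}, and all i ∈ {1, …, m}. Let ȳ ∈ ℝ^m satisfy ȳ_i = 0 for all i > n, and let z̄ ∈ ℝ^m be the vector with z̄_i = 1 for i ≤ n and z̄_i = 0 for i > n. Then for every j ∈ {1, …, n}, the ratio (B_k ȳ)_j / (B_k z̄)_j is well defined for k ≥ K and converges as k → ∞ to (Σ_{i=1}^n ȳ_i) / n. -/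
open Matrix Filter

theorem statement16 (n m : ℕ) (hn : 1 ≤ n) (hnm : n ≤ m)
    (B : ℕ → Matrix (Fin m) (Fin m) ℝ)
    (hcs : ∀ k, ColStoch (B k))
    (hδ : Tendsto (fun k => ⨆ j, ⨆ i₁, ⨆ i₂, |B k j i₁ - B k j i₂|) atTop (nhds 0))
    (cmin : ℝ) (hcmin : 0 < cmin) (K : ℕ)
    (hlb : ∀ k, K ≤ k → ∀ j i : Fin m, (j : ℕ) < n → cmin ≤ B k j i)
    (ybar : Fin m → ℝ) (hy : ∀ i : Fin m, n ≤ (i : ℕ) → ybar i = 0)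
    (zbar : Fin m → ℝ) (hz : ∀ i : Fin m, zbar i = if (i : ℕ) < n then 1 else 0) :
    ∀ j : Fin m, (j : ℕ) < n →
      (∀ k, K ≤ k → 0 < (B k).mulVec zbar j) ∧
        Tendsto (fun k => (B k).mulVec ybar j / (B k).mulVec zbar j) atTop
          (nhds ((∑ i ∈ Finset.univ.filter fun i : Fin m => (i : ℕ) < n, ybar i) / (n : ℝ))) := by
  intro j hj
  have hm : 0 < m := lt_of_lt_of_le hn hnm
  have hn' : (0:ℝ) < (n:ℝ) := by exact_mod_cast hn
  set T : Finset (Fin m) := Finset.univ.filter (fun i : Fin m => (i : ℕ) < n) with hT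
  have hTcard : T.card = n := by
    have hTeq : T = Finset.map (Fin.castLEEmb hnm) Finset.univ := by
      ext i
      simp only [hT, Finset.mem_filter, Finset.mem_univ, true_and, Finset.mem_map,
        Fin.castLEEmb, Function.Embedding.coeFn_mk]
      constructor
      · intro h; exact ⟨⟨(i : ℕ), h⟩, rfl⟩
      · rintro ⟨a, rfl⟩; simpa using a.isLt
    rw [hTeq]; simp
  -- denominator formula
  have hden : ∀ k, (B k).mulVec zbar j = ∑ i ∈ T, B k j i := by
    intro k
    have h1 : (B k).mulVec zbar j = ∑ i : Fin m, if (i : ℕ) < n then B k j i else 0 := by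
      simp [Matrix.mulVec, dotProduct, hz, mul_ite]
    rw [h1, hT, ← Finset.sum_filter]
  -- numerator formula
  have hnum : ∀ k, (B k).mulVec ybar j = ∑ i ∈ T, B k j i * ybar i := by
    intro k
    have h1 : (B k).mulVec ybar j = ∑ i, B k j i * ybar i := by
      simp [Matrix.mulVec, dotProduct]
    have h2 : ∀ i : Fin m, B k j i * ybar i = if (i : ℕ) < n then B k j i * ybar i else 0 := by
      intro i
      by_cases h : (i : ℕ) < n
      · simp [h]
      · simp [h, hy i (le_of_not_gt h)]
    rw [h1, hT, Finset.sum_congr rfl fun i _ => h2 i, ← Finset.sum_filter]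
  -- denominator lower bound
  have hdenlb : ∀ k, K ≤ k → (n : ℝ) * cmin ≤ (B k).mulVec zbar j := by
    intro k hk
    rw [hden]
    calc (n:ℝ) * cmin = ∑ _i ∈ T, cmin := by rw [Finset.sum_const, hTcard, nsmul_eq_mul]
    _ ≤ ∑ i ∈ T, B k j i := Finset.sum_le_sum fun i _ => hlb k hk j i hj
  have hncmin : (0:ℝ) < (n:ℝ) * cmin := mul_pos hn' hcmin
  have hpos : ∀ k, K ≤ k → 0 < (B k).mulVec zbar j := fun k hk =>
    lt_of_lt_of_le hncmin (hdenlb k hk)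
  refine ⟨hpos, ?_⟩
  -- delta bound
  set δ : ℕ → ℝ := fun k => ⨆ j, ⨆ i₁, ⨆ i₂, |B k j i₁ - B k j i₂| with hδdef
  have hδle : ∀ k (j' i₁ i₂ : Fin m), |B k j' i₁ - B k j' i₂| ≤ δ k := by
    intro k j' i₁ i₂
    have h1 : |B k j' i₁ - B k j' i₂| ≤ ⨆ i₂, |B k j' i₁ - B k j' i₂| :=
      le_ciSup (f := fun i₂ => |B k j' i₁ - B k j' i₂|) (Finite.bddAbove_range _) i₂
    have h2 : (⨆ i₂, |B k j' i₁ - B k j' i₂|) ≤ ⨆ i₁, ⨆ i₂, |B k j' i₁ - B k j' i₂| :=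
      le_ciSup (f := fun i₁ => ⨆ i₂, |B k j' i₁ - B k j' i₂|) (Finite.bddAbove_range _) i₁
    have h3 : (⨆ i₁, ⨆ i₂, |B k j' i₁ - B k j' i₂|) ≤ δ k :=
      le_ciSup (f := fun j' => ⨆ i₁, ⨆ i₂, |B k j' i₁ - B k j' i₂|) (Finite.bddAbove_range _) j'
    exact h1.trans (h2.trans h3)
  have hδ0 : ∀ k, 0 ≤ δ k := by
    intro k
    have := hδle k ⟨0, hm⟩ ⟨0, hm⟩ ⟨0, hm⟩
    simpa using this
  set S : ℝ := ∑ i ∈ T, ybar i with hS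
  set M : ℝ := ∑ i ∈ T, |ybar i| with hM
  have hM0 : 0 ≤ M := Finset.sum_nonneg fun i _ => abs_nonneg _
  -- key estimate
  have key : ∀ k, K ≤ k →
      |(B k).mulVec ybar j / (B k).mulVec zbar j - S / n| ≤ (M / ((n:ℝ) * cmin)) * δ k := by
    intro k hk
    set den := (B k).mulVec zbar j with hdeneq
    set num := (B k).mulVec ybar j with hnumeq
    have hd : 0 < den := hpos k hk
    have heq : num / den - S / n = ((n:ℝ) * num - S * den) / ((n:ℝ) * den) := by
      field_simp
    have step : ∀ i : Fin m, ∑ i' ∈ T, ybar i * (B k j i - B k j i')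
        = (n:ℝ) * (B k j i * ybar i) - ybar i * (∑ i' ∈ T, B k j i') := by
      intro i
      rw [← Finset.mul_sum, Finset.sum_sub_distrib, Finset.sum_const, hTcard, nsmul_eq_mul]
      rw [Finset.mul_sum, ← Finset.mul_sum]
      ring
    have hdiff : (n:ℝ) * num - S * den =
        ∑ i ∈ T, ∑ i' ∈ T, ybar i * (B k j i - B k j i') := by
      have h2 : ∑ i ∈ T, ∑ i' ∈ T, ybar i * (B k j i - B k j i')
          = ∑ i ∈ T, ((n:ℝ) * (B k j i * ybar i) - ybar i * (∑ i' ∈ T, B k j i')) :=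
        Finset.sum_congr rfl fun i _ => step i
      rw [hnumeq, hdeneq, hnum, hden, hS, h2, Finset.sum_sub_distrib, ← Finset.mul_sum,
        ← Finset.sum_mul]
    have hbd : |(n:ℝ) * num - S * den| ≤ (n:ℝ) * (M * δ k) := by
      rw [hdiff]
      calc |∑ i ∈ T, ∑ i' ∈ T, ybar i * (B k j i - B k j i')|
          ≤ ∑ i ∈ T, |∑ i' ∈ T, ybar i * (B k j i - B k j i')| :=
            Finset.abs_sum_le_sum_abs _ _
        _ ≤ ∑ i ∈ T, ∑ i' ∈ T, |ybar i * (B k j i - B k j i')| :=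
            Finset.sum_le_sum fun i _ => Finset.abs_sum_le_sum_abs _ _
        _ ≤ ∑ i ∈ T, ∑ _i' ∈ T, |ybar i| * δ k := by
            refine Finset.sum_le_sum fun i _ => Finset.sum_le_sum fun i' _ => ?_
            rw [abs_mul]
            exact mul_le_mul_of_nonneg_left (hδle k j i i') (abs_nonneg _)
        _ = ∑ i ∈ T, (n:ℝ) * (|ybar i| * δ k) := by
            simp [Finset.sum_const, hTcard, nsmul_eq_mul]
        _ = (n:ℝ) * (M * δ k) := by
            rw [← Finset.mul_sum, hM, Finset.sum_mul]
    have h2 : ((n:ℝ) * (M * δ k)) / ((n:ℝ) * ((n:ℝ) * cmin)) = (M / ((n:ℝ) * cmin)) * δ k := by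
      field_simp
    rw [heq, abs_div, abs_of_pos (mul_pos hn' hd)]
    calc |(n:ℝ) * num - S * den| / ((n:ℝ) * den)
        ≤ ((n:ℝ) * (M * δ k)) / ((n:ℝ) * ((n:ℝ) * cmin)) :=
          div_le_div₀ (mul_nonneg hn'.le (mul_nonneg hM0 (hδ0 k))) hbd
            (mul_pos hn' hncmin) (mul_le_mul_of_nonneg_left (hdenlb k hk) hn'.le)
      _ = _ := h2
  have hg : Tendsto (fun k => (M / ((n:ℝ) * cmin)) * δ k) atTop (nhds 0) := by
    simpa using hδ.const_mul (M / ((n:ℝ) * cmin))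
  rw [tendsto_iff_dist_tendsto_zero]
  refine squeeze_zero' (Eventually.of_forall fun k => dist_nonneg) ?_ hg
  filter_upwards [eventually_ge_atTop K] with k hk
  rw [Real.dist_eq]
  exact key k hk
end
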